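/- arXiv:1810.10054 — 2 statements merged into one kernel-verified Lean document; each statement's English description precedes it below -/
import Mathlib

section
/- Density filtration lemma: Let H be a coideal of FIN_k^∞ and A ∈ H. Given a family (D_a), indexed by finite block sequences a that are condensations of A, such that each D_a is dense open in H ∩ [depth_A(a), A], there exists a sequence (A_n) of elements of H, each a condensation of A, such that A_n ∈ D_a for every a with depth_A(a) = n. -/
open scoped symmDiff

namespace FINkSpace

/-- The support of `p : ℕ → ℕ`. -/
def supp (p : ℕ → ℕ) : Set ℕ := {n | p n ≠ 0}

/-- `p` is an element of `FIN_k`: values at most `k`, finite support, `k` attained. -/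
def IsFINk (k : ℕ) (p : ℕ → ℕ) : Prop :=
  (∀ n, p n ≤ k) ∧ (supp p).Finite ∧ ∃ n, p n = k

/-- The tetris operation `T(p)(n) = max (p n - 1) 0` (truncated subtraction). -/
def tetris (p : ℕ → ℕ) : ℕ → ℕ := fun n => p n - 1

/-- `A` is an infinite block sequence of elements of `FIN_k`. -/
def IsBlockSeq (k : ℕ) (A : ℕ → ℕ → ℕ) : Prop :=
  (∀ n, IsFINk k (A n)) ∧ ∀ n i j, A n i ≠ 0 → A (n + 1) j ≠ 0 → i < j

/-- `p` belongs to the combinatorial span `[B]`: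
`p = T^{(i₀)}(B n₀) + ⋯ + T^{(i_l)}(B n_l)` with `n₀ < ⋯ < n_l` and some `i_j = 0`.
Note `T^{(i)}(q) m = q m - i` (truncated subtraction). -/
def InSpan (k : ℕ) (B : ℕ → ℕ → ℕ) (p : ℕ → ℕ) : Prop :=
  ∃ (l : ℕ) (n : Fin (l + 1) → ℕ) (i : Fin (l + 1) → ℕ),
    StrictMono n ∧ (∀ j, i j ≤ k) ∧ (∃ j, i j = 0) ∧
    p = fun m => ∑ j, (B (n j) m - i j)

/-- `A ≤ B` : `A` is a condensation of `B` (every term of `A` lies in `[B]`). -/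
def Cond (k : ℕ) (A B : ℕ → ℕ → ℕ) : Prop := ∀ n, InSpan k B (A n)

/-- `A ≤* B` : all but finitely many terms of `A` lie in `[B]`. -/
def AlmostCond (k : ℕ) (A B : ℕ → ℕ → ℕ) : Prop := ∃ N, ∀ n, N ≤ n → InSpan k B (A n)

/-- `a` is a finite block sequence of elements of `FIN_k`. -/
def IsFinBlockSeq (k : ℕ) (a : List (ℕ → ℕ)) : Prop :=
  (∀ p ∈ a, IsFINk k p) ∧
  ∀ m, m + 1 < a.length → ∀ i j,
    (a.getD m fun _ => 0) i ≠ 0 → (a.getD (m + 1) fun _ => 0) j ≠ 0 → i < j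

/-- `p` belongs to the span of the finite block sequence `a`. -/
def InSpanList (k : ℕ) (a : List (ℕ → ℕ)) (p : ℕ → ℕ) : Prop :=
  ∃ (l : ℕ) (n : Fin (l + 1) → ℕ) (i : Fin (l + 1) → ℕ),
    StrictMono n ∧ (∀ j, n j < a.length) ∧ (∀ j, i j ≤ k) ∧ (∃ j, i j = 0) ∧
    p = fun m => ∑ j, ((a.getD (n j) fun _ => 0) m - i j)

/-- `rList n A` is the finite block sequence of the first `n` blocks of `A`. -/
def rList (n : ℕ) (A : ℕ → ℕ → ℕ) : List (ℕ → ℕ) := (List.range n).map A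

/-- `b ≤_fin a` : every term of the finite block sequence `b` lies in the span of `a`. -/
def LeFin (k : ℕ) (b a : List (ℕ → ℕ)) : Prop :=
  IsFinBlockSeq k b ∧ ∀ p ∈ b, InSpanList k a p

/-- The Ellentuck-type basic set `[a,A]`. -/
def Basic (k : ℕ) (a : List (ℕ → ℕ)) (A : ℕ → ℕ → ℕ) : Set (ℕ → ℕ → ℕ) :=
  {B | IsBlockSeq k B ∧ rList a.length B = a ∧ Cond k B A}

/-- `depth_A(a)` : the least `n` with `a ≤_fin r_n(A)`. -/
noncomputable def depth (k : ℕ) (A : ℕ → ℕ → ℕ) (a : List (ℕ → ℕ)) : ℕ :=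
  sInf {n | ∀ p ∈ a, InSpanList k (rList n A) p}

/-- `a ∈ FIN_k^{<∞} ↾ A` : `a` is a finite block sequence all whose terms lie in `[A]`. -/
def FinCond (k : ℕ) (a : List (ℕ → ℕ)) (A : ℕ → ℕ → ℕ) : Prop :=
  IsFinBlockSeq k a ∧ ∀ p ∈ a, InSpan k A p

end FINkSpace

namespace FINkSpace

/-- A coideal on `FIN_k^∞` (Definition of coideal in the paper). -/
structure Coideal (k : ℕ) where
  mem : (ℕ → ℕ → ℕ) → Prop
  blockseq : ∀ A, mem A → IsBlockSeq k A
  finiteChanges : ∀ A B, mem A → IsBlockSeq k B → (Set.range A ∆ Set.range B).Finite → mem B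
  upward : ∀ A B, mem A → IsBlockSeq k B → Cond k A B → mem B
  a3_1 : ∀ A, mem A → ∀ a, FinCond k a A →
    ∀ B, mem B → B ∈ Basic k (rList (depth k A a) A) A → (Basic k a B).Nonempty
  a3_2 : ∀ A, mem A → ∀ a, FinCond k a A →
    ∀ B, mem B → Cond k B A → (Basic k a B).Nonempty →
      ∃ A', mem A' ∧ A' ∈ Basic k (rList (depth k A a) A) A ∧
        (Basic k a A').Nonempty ∧ Basic k a A' ⊆ Basic k a B
  a4 : ∀ A, mem A → ∀ a, FinCond k a A → ∀ O : Set (List (ℕ → ℕ)),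
    ∃ B, mem B ∧ B ∈ Basic k (rList (depth k A a) A) A ∧
      ({b | ∃ C ∈ Basic k a B, b = rList (a.length + 1) C} ⊆ O ∨
       {b | ∃ C ∈ Basic k a B, b = rList (a.length + 1) C} ∩ O = ∅)

/-- `D` is dense open in `S` (with respect to the condensation order). -/
def DenseOpenIn (k : ℕ) (D S : Set (ℕ → ℕ → ℕ)) : Prop :=
  D ⊆ S ∧ (∀ A ∈ S, ∃ B ∈ D, Cond k B A) ∧
  ∀ A B, A ∈ S → B ∈ D → Cond k A B → A ∈ D

/-- `H` is a selective coideal. -/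
def Selective (k : ℕ) (H : Coideal k) : Prop :=
  ∀ a A, H.mem A → (Basic k a A).Nonempty →
    ∀ As : ℕ → ℕ → ℕ → ℕ,
      (∀ n, H.mem (As n) ∧ Cond k (As n) A ∧ Cond k (As (n + 1)) (As n) ∧
        (Basic k a (As n)).Nonempty) →
      ∃ B, H.mem B ∧ B ∈ Basic k a A ∧
        ∀ b, FinCond k b B → Basic k b B ⊆ Basic k b (As (depth k A b))

/-- `H` is a semiselective coideal. -/
def Semiselective (k : ℕ) (H : Coideal k) : Prop :=
  ∀ A, H.mem A →
    ∀ D : List (ℕ → ℕ) → Set (ℕ → ℕ → ℕ),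
      (∀ a, FinCond k a A →
        DenseOpenIn k (D a) ({B | H.mem B} ∩ Basic k (rList (depth k A a) A) A)) →
      ∀ C, H.mem C → Cond k C A →
        ∃ B, H.mem B ∧ Cond k B C ∧
          ∃ As : List (ℕ → ℕ) → ℕ → ℕ → ℕ,
            (∀ a, FinCond k a A → As a ∈ D a) ∧
            ∀ a, FinCond k a B → Basic k a B ⊆ Basic k a (As a)

end FINkSpace

namespace FINkSpace

lemma rList_length (n : ℕ) (A : ℕ → ℕ → ℕ) : (rList n A).length = n := by
  simp [rList]

lemma rList_getD (n m : ℕ) (A : ℕ → ℕ → ℕ) (h : m < n) :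
    (rList n A).getD m (fun _ => 0) = A m := by
  rw [List.getD_eq_getElem _ _ (by simpa [rList] using h)]
  simp [rList]

lemma cond_self (k : ℕ) (A : ℕ → ℕ → ℕ) : Cond k A A := by
  intro n
  refine ⟨0, fun _ => n, fun _ => 0, ?_, fun j => Nat.zero_le k, ⟨0, rfl⟩, ?_⟩
  · intro a b h
    omega
  · funext m; simp

lemma blockSeq_sep {k : ℕ} {C : ℕ → ℕ → ℕ} (hC : IsBlockSeq k C) :
    ∀ d n i j, C n i ≠ 0 → C (n + d + 1) j ≠ 0 → i < j := by
  intro d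
  induction d with
  | zero => intro n i j h1 h2; exact hC.2 n i j h1 h2
  | succ d ih =>
    intro n i j h1 h2
    have hk : k ≠ 0 := by
      intro h
      subst h
      exact h1 (Nat.le_antisymm ((hC.1 n).1 i) (Nat.zero_le _))
    obtain ⟨m, hm⟩ := (hC.1 (n + d + 1)).2.2
    have hm' : C (n + d + 1) m ≠ 0 := by rw [hm]; exact hk
    have h3 : i < m := ih n i m h1 hm'
    have h4 : m < j := by
      refine hC.2 (n + d + 1) m j hm' ?_
      have he : n + d + 1 + 1 = n + (d + 1) + 1 := by omega
      rw [he]; exact h2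
    omega

lemma blockSeq_lt {k : ℕ} {C : ℕ → ℕ → ℕ} (hC : IsBlockSeq k C) {n n' i j : ℕ} (h : n < n')
    (h1 : C n i ≠ 0) (h2 : C n' j ≠ 0) : i < j := by
  obtain ⟨d, rfl⟩ : ∃ d, n' = n + d + 1 := ⟨n' - n - 1, by omega⟩
  exact blockSeq_sep hC d n i j h1 h2

lemma blockSeq_disjoint {k : ℕ} {C : ℕ → ℕ → ℕ} (hC : IsBlockSeq k C) {n n' m : ℕ} (h : n ≠ n')
    (h1 : C n m ≠ 0) : C n' m = 0 := by
  by_contra h2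
  rcases Nat.lt_or_ge n n' with hlt | hge
  · exact lt_irrefl m (blockSeq_lt hC hlt h1 h2)
  · exact lt_irrefl m (blockSeq_lt hC (show n' < n by omega) h2 h1)

lemma sum_sub_distrib {s : Finset ℕ} {x : ℕ → ℕ} {i : ℕ}
    (h : ∀ q ∈ s, ∀ q' ∈ s, x q ≠ 0 → x q' ≠ 0 → q = q') :
    (∑ q ∈ s, x q) - i = ∑ q ∈ s, (x q - i) := by
  by_cases hex : ∃ q ∈ s, x q ≠ 0
  · obtain ⟨q0, hq0, hx0⟩ := hex
    rw [Finset.sum_eq_single_of_mem q0 hq0 (by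
      intro q hq hne
      by_contra hxq
      exact hne (h q hq q0 hq0 hxq hx0)),
      Finset.sum_eq_single_of_mem q0 hq0 (by
      intro q hq hne
      have : x q = 0 := by
        by_contra hxq
        exact hne (h q hq q0 hq0 hxq hx0)
      simp [this])]
  · push_neg at hex
    rw [Finset.sum_eq_zero hex, Finset.sum_eq_zero (fun q hq => by simp [hex q hq])]
    omega

end FINkSpace
namespace FINkSpace

/-- Finset form of membership in the span. -/
def InSpanF (k : ℕ) (A : ℕ → ℕ → ℕ) (p : ℕ → ℕ) : Prop :=
  ∃ (s : Finset ℕ) (f : ℕ → ℕ), s.Nonempty ∧ (∀ q, f q ≤ k) ∧ (∃ q ∈ s, f q = 0) ∧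
    p = fun m => ∑ q ∈ s, (A q m - f q)

lemma inSpan_iff (k : ℕ) (A : ℕ → ℕ → ℕ) (p : ℕ → ℕ) :
    InSpan k A p ↔ InSpanF k A p := by
  classical
  constructor
  · rintro ⟨l, n, i, hmono, hle, ⟨j0, hj0⟩, hp⟩
    have hinj : Function.Injective n := hmono.injective
    refine ⟨Finset.image n Finset.univ,
      fun q => if h : ∃ j, n j = q then i h.choose else 0,
      ⟨n j0, Finset.mem_image_of_mem n (Finset.mem_univ j0)⟩, ?_, ?_, ?_⟩
    · intro q
      by_cases h : ∃ j, n j = q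
      · simp only [dif_pos h]; exact hle _
      · simp only [dif_neg h]; exact Nat.zero_le _
    · refine ⟨n j0, Finset.mem_image_of_mem n (Finset.mem_univ j0), ?_⟩
      have h : ∃ j, n j = n j0 := ⟨j0, rfl⟩
      simp only [dif_pos h]
      rw [hinj h.choose_spec]; exact hj0
    · rw [hp]
      funext m
      rw [Finset.sum_image (fun x _ y _ hxy => hinj hxy)]
      refine Finset.sum_congr rfl (fun j _ => ?_)
      have h : ∃ j', n j' = n j := ⟨j, rfl⟩
      simp only [dif_pos h]
      rw [hinj h.choose_spec]
  · rintro ⟨s, f, hsne, hfle, ⟨q0, hq0, hf0⟩, hp⟩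
    have hcard : s.card = (s.card - 1) + 1 := (Nat.succ_pred_eq_of_pos hsne.card_pos).symm
    set e := s.orderIsoOfFin hcard with he
    refine ⟨s.card - 1, fun j => (e j : ℕ), fun j => f (e j), ?_, fun j => hfle _, ?_, ?_⟩
    · intro a b hab
      exact_mod_cast e.strictMono hab
    · refine ⟨e.symm ⟨q0, hq0⟩, ?_⟩
      show f (e (e.symm ⟨q0, hq0⟩) : ℕ) = 0
      rw [OrderIso.apply_symm_apply]; exact hf0
    · rw [hp]
      funext m
      rw [← Finset.sum_coe_sort s (fun q => A q m - f q)]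
      exact (Fintype.sum_equiv e.toEquiv _ _ (fun j => rfl)).symm

end FINkSpace
namespace FINkSpace

lemma cond_trans {k : ℕ} {A B C : ℕ → ℕ → ℕ} (hA : IsBlockSeq k A) (hC : IsBlockSeq k C)
    (hB : IsBlockSeq k B) (hBC : Cond k B C) (hCA : Cond k C A) : Cond k B A := by
  classical
  intro n
  rcases Nat.eq_zero_or_pos k with rfl | hk
  · -- k = 0 : everything is the zero function
    refine ⟨0, fun _ => 0, fun _ => 0, ?_, fun j => le_refl 0, ⟨0, rfl⟩, ?_⟩
    · intro a b h; omega
    · funext m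
      have h1 : B n m = 0 := Nat.le_antisymm ((hB.1 n).1 m) (Nat.zero_le _)
      have h2 : A 0 m = 0 := Nat.le_antisymm ((hA.1 0).1 m) (Nat.zero_le _)
      simp [h1, h2]
  -- k ≥ 1
  rw [inSpan_iff]
  obtain ⟨s, f, hsne, hfle, ⟨j0, hj0, hfj0⟩, hp⟩ := (inSpan_iff k C (B n)).mp (hBC n)
  choose sj gj hjne hgle hg0 hCj using fun j => (inSpan_iff k A (C j)).mp (hCA j)
  set s' : ℕ → Finset ℕ := fun j => (sj j).filter (fun q => gj j q + f j < k) with hs'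
  -- supports of distinct blocks of C are disjoint; hence the filtered index sets are disjoint
  have hdisj : ∀ j ∈ s, ∀ j' ∈ s, j ≠ j' → Disjoint (s' j) (s' j') := by
    intro j _ j' _ hne
    rw [Finset.disjoint_left]
    intro q hq hq'
    simp only [hs', Finset.mem_filter] at hq hq'
    obtain ⟨m, hm⟩ := (hA.1 q).2.2
    have key : ∀ j'' , q ∈ sj j'' → gj j'' q + f j'' < k → C j'' m ≠ 0 := by
      intro j'' hmem hlt
      have h1 : A q m - gj j'' q ≠ 0 := by rw [hm]; omega
      have h2 : A q m - gj j'' q ≤ C j'' m := by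
        rw [hCj j'']
        exact Finset.single_le_sum (f := fun q' => A q' m - gj j'' q')
          (fun q' _ => Nat.zero_le _) hmem
      omega
    exact key j' hq'.1 hq'.2 (blockSeq_disjoint hC hne (key j hq.1 hq.2))
  set S : Finset ℕ := s.biUnion s' with hS
  set F : ℕ → ℕ := fun q => ∑ j ∈ s, if q ∈ s' j then gj j q + f j else 0 with hF
  have hFval : ∀ j ∈ s, ∀ q ∈ s' j, F q = gj j q + f j := by
    intro j hj q hq
    have h1 : ∑ j' ∈ s, (if q ∈ s' j' then gj j' q + f j' else 0) =
        (if q ∈ s' j then gj j q + f j else 0) := by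
      refine Finset.sum_eq_single_of_mem j hj (fun j' hj' hne => ?_)
      rw [if_neg]
      intro hq'
      exact (Finset.disjoint_left.mp (hdisj j' hj' j hj hne) hq') hq
    show ∑ j' ∈ s, (if q ∈ s' j' then gj j' q + f j' else 0) = gj j q + f j
    rw [h1, if_pos hq]
  -- pick q0 in sj j0 with gj j0 q0 = 0
  obtain ⟨q0, hq00, hg00⟩ := hg0 j0
  have hq0s' : q0 ∈ s' j0 := by
    simp only [hs', Finset.mem_filter]
    exact ⟨hq00, by omega⟩
  refine ⟨S, F, ⟨q0, Finset.mem_biUnion.mpr ⟨j0, hj0, hq0s'⟩⟩, ?_, ?_, ?_⟩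
  · -- F q ≤ k
    intro q
    by_cases hq : q ∈ S
    · obtain ⟨j, hj, hqj⟩ := Finset.mem_biUnion.mp hq
      rw [hFval j hj q hqj]
      have := (Finset.mem_filter.mp hqj).2
      omega
    · show (∑ j ∈ s, if q ∈ s' j then gj j q + f j else 0) ≤ k
      rw [Finset.sum_eq_zero]
      · exact Nat.zero_le _
      · intro j hj
        rw [if_neg]
        intro hqj
        exact hq (Finset.mem_biUnion.mpr ⟨j, hj, hqj⟩)
  · refine ⟨q0, Finset.mem_biUnion.mpr ⟨j0, hj0, hq0s'⟩, ?_⟩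
    rw [hFval j0 hj0 q0 hq0s', hg00, hfj0]
  · rw [hp]
    funext m
    rw [hS, Finset.sum_biUnion (fun j hj j' hj' hne => hdisj j hj j' hj' hne)]
    refine Finset.sum_congr rfl (fun j hj => ?_)
    -- C j m - f j = ∑ q in s' j, (A q m - F q)
    have step1 : C j m - f j = ∑ q ∈ sj j, (A q m - gj j q - f j) := by
      rw [hCj j]
      refine sum_sub_distrib (fun q hq q' hq' hx hx' => ?_)
      have hA1 : A q m ≠ 0 := fun h0 => hx (by simp [h0])
      have hA2 : A q' m ≠ 0 := fun h0 => hx' (by simp [h0])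
      by_contra hne
      exact hA2 (blockSeq_disjoint hA hne hA1)
    rw [step1]
    have step2 : ∑ q ∈ sj j, (A q m - gj j q - f j) =
        ∑ q ∈ s' j, (A q m - gj j q - f j) := by
      refine (Finset.sum_filter_of_ne (fun q hq hne => ?_)).symm
      by_contra hge
      push_neg at hge
      have : A q m ≤ gj j q + f j := le_trans ((hA.1 q).1 m) hge
      omega
    rw [step2]
    refine Finset.sum_congr rfl (fun q hq => ?_)
    rw [hFval j hj q hq, Nat.sub_sub]

end FINkSpace
namespace FINkSpace

lemma inSpanList_mono {k : ℕ} {p : ℕ → ℕ} {A : ℕ → ℕ → ℕ} {N N' : ℕ} (h : N ≤ N')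
    (hp : InSpanList k (rList N A) p) : InSpanList k (rList N' A) p := by
  obtain ⟨l, n, i, h1, h2, h3, h4, h5⟩ := hp
  rw [rList_length] at h2
  refine ⟨l, n, i, h1, ?_, h3, h4, ?_⟩
  · intro j; rw [rList_length]; exact lt_of_lt_of_le (h2 j) h
  · rw [h5]
    funext m
    refine Finset.sum_congr rfl (fun j _ => ?_)
    rw [rList_getD _ _ _ (h2 j), rList_getD _ _ _ (lt_of_lt_of_le (h2 j) h)]

lemma inSpan_to_list {k : ℕ} {p : ℕ → ℕ} {A : ℕ → ℕ → ℕ} (h : InSpan k A p) :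
    ∃ N, InSpanList k (rList N A) p := by
  obtain ⟨l, n, i, h1, h2, h3, h4⟩ := h
  refine ⟨n (Fin.last l) + 1, l, n, i, h1, ?_, h2, h3, ?_⟩
  · intro j
    rw [rList_length]
    exact Nat.lt_succ_of_le (h1.monotone (Fin.le_last j))
  · rw [h4]
    funext m
    refine Finset.sum_congr rfl (fun j _ => ?_)
    rw [rList_getD _ _ _ (Nat.lt_succ_of_le (h1.monotone (Fin.le_last j)))]

lemma exists_uniform {k : ℕ} {A : ℕ → ℕ → ℕ} :
    ∀ a : List (ℕ → ℕ), (∀ p ∈ a, InSpan k A p) →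
      ∃ N, ∀ p ∈ a, InSpanList k (rList N A) p := by
  intro a
  induction a with
  | nil => exact fun _ => ⟨0, by simp⟩
  | cons p t ih =>
    intro h
    obtain ⟨N1, hN1⟩ := inSpan_to_list (h p (by simp))
    obtain ⟨N2, hN2⟩ := ih (fun q hq => h q (by simp [hq]))
    refine ⟨max N1 N2, fun q hq => ?_⟩
    rcases List.mem_cons.mp hq with rfl | hq'
    · exact inSpanList_mono (le_max_left _ _) hN1
    · exact inSpanList_mono (le_max_right _ _) (hN2 q hq')

lemma depth_spec {k : ℕ} {a : List (ℕ → ℕ)} {A : ℕ → ℕ → ℕ} (ha : FinCond k a A) :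
    ∀ p ∈ a, InSpanList k (rList (depth k A a) A) p := by
  obtain ⟨N, hN⟩ := exists_uniform a ha.2
  exact Nat.sInf_mem (⟨N, hN⟩ : {n | ∀ p ∈ a, InSpanList k (rList n A) p}.Nonempty)

lemma finBlockSeq_sep {k : ℕ} {a : List (ℕ → ℕ)} (ha : IsFinBlockSeq k a) :
    ∀ d m, m + d + 1 < a.length → ∀ i j,
      (a.getD m fun _ => 0) i ≠ 0 → (a.getD (m + d + 1) fun _ => 0) j ≠ 0 → i < j := by
  intro d
  induction d with
  | zero => intro m hm i j h1 h2; exact ha.2 m hm i j h1 h2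
  | succ d ih =>
    intro m hm i j h1 h2
    have hk : k ≠ 0 := by
      intro h
      subst h
      have hlt : m + d + 1 + 1 < a.length := by omega
      have := ha.1 _ (List.getElem_mem (l := a) (n := m + d + 1 + 1) (by omega))
      rw [← List.getD_eq_getElem a (fun _ => 0) (by omega)] at this
      have heq : m + d + 1 + 1 = m + (d + 1) + 1 := by omega
      rw [heq] at this
      exact h2 (Nat.le_antisymm (this.1 j) (Nat.zero_le _))
    have hmem : (a.getD (m + d + 1) fun _ => 0) ∈ a := by
      rw [List.getD_eq_getElem a (fun _ => 0) (show m + d + 1 < a.length by omega)]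
      exact List.getElem_mem _
    obtain ⟨w, hw⟩ := (ha.1 _ hmem).2.2
    have hw' : (a.getD (m + d + 1) fun _ => 0) w ≠ 0 := by rw [hw]; exact hk
    have h3 : i < w := ih m (by omega) i w h1 hw'
    have h4 : w < j := by
      refine ha.2 (m + d + 1) (by omega) w j hw' ?_
      have heq : m + d + 1 + 1 = m + (d + 1) + 1 := by omega
      rw [heq]; exact h2
    omega

lemma finBlockSeq_lt {k : ℕ} {a : List (ℕ → ℕ)} (ha : IsFinBlockSeq k a) {m m' i j : ℕ}
    (h : m < m') (hm' : m' < a.length)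
    (h1 : (a.getD m fun _ => 0) i ≠ 0) (h2 : (a.getD m' fun _ => 0) j ≠ 0) : i < j := by
  obtain ⟨d, rfl⟩ : ∃ d, m' = m + d + 1 := ⟨m' - m - 1, by omega⟩
  exact finBlockSeq_sep ha d m hm' i j h1 h2

lemma finite_lists {α : Type*} {P : Set α} (hP : P.Finite) :
    ∀ N, {l : List α | l.length ≤ N ∧ ∀ p ∈ l, p ∈ P}.Finite := by
  intro N
  induction N with
  | zero =>
    refine Set.Finite.subset (Set.finite_singleton []) ?_
    rintro l ⟨hl, -⟩
    simp only [Set.mem_singleton_iff]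
    exact List.eq_nil_of_length_eq_zero (by omega)
  | succ N ih =>
    refine Set.Finite.subset (((hP.prod ih).image (fun x => x.1 :: x.2)).insert []) ?_
    rintro l ⟨hl, hmem⟩
    cases l with
    | nil => exact Set.mem_insert _ _
    | cons x t =>
      refine Set.mem_insert_iff.mpr (Or.inr ⟨(x, t), ⟨hmem x (by simp), ?_, ?_⟩, rfl⟩)
      · show t.length ≤ N
        simp only [List.length_cons] at hl; omega
      · exact fun p hp => hmem p (by simp [hp])

lemma finite_funcs (k : ℕ) (Fs : Finset ℕ) :
    {p : ℕ → ℕ | (∀ m, p m ≤ k) ∧ ∀ m, p m ≠ 0 → m ∈ Fs}.Finite := by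
  classical
  refine Set.Finite.of_finite_image (f := fun p (m : ↥Fs) => (⟨min (p m.1) k,
    Nat.lt_succ_of_le (min_le_right _ _)⟩ : Fin (k + 1))) (Set.toFinite _) ?_
  intro p hp p' hp' heq
  funext m
  by_cases hm : m ∈ Fs
  · have := congrFun heq ⟨m, hm⟩
    have h1 : min (p m) k = min (p' m) k := congrArg Fin.val this
    rw [min_eq_left (hp.1 m), min_eq_left (hp'.1 m)] at h1
    exact h1
  · have h1 : p m = 0 := by by_contra h; exact hm (hp.2 m h)
    have h2 : p' m = 0 := by by_contra h; exact hm (hp'.2 m h)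
    rw [h1, h2]

end FINkSpace
namespace FINkSpace

lemma finite_depth_eq {k n : ℕ} (hk : 1 ≤ k) {A : ℕ → ℕ → ℕ} (hA : IsBlockSeq k A) :
    {a : List (ℕ → ℕ) | FinCond k a A ∧ depth k A a = n}.Finite := by
  classical
  set Fs : Finset ℕ := (Finset.range n).biUnion (fun q => (hA.1 q).2.1.toFinset) with hFs
  refine Set.Finite.subset (finite_lists (finite_funcs k Fs) Fs.card) ?_
  rintro a ⟨ha, hd⟩
  have hspan : ∀ p ∈ a, InSpanList k (rList n A) p := hd ▸ depth_spec ha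
  have pP : ∀ p ∈ a, (∀ m, p m ≤ k) ∧ ∀ m, p m ≠ 0 → m ∈ Fs := by
    intro p hp
    refine ⟨(ha.1.1 p hp).1, fun m hm => ?_⟩
    obtain ⟨l, nn, ii, hmono, hlt, hile, hi0, hpe⟩ := hspan p hp
    rw [hpe] at hm
    obtain ⟨j, -, hj⟩ := Finset.exists_ne_zero_of_sum_ne_zero hm
    have hjn : nn j < n := by have := hlt j; rwa [rList_length] at this
    rw [rList_getD _ _ _ hjn] at hj
    have hAj : A (nn j) m ≠ 0 := fun h0 => hj (by simp [h0])
    exact Finset.mem_biUnion.mpr ⟨nn j, Finset.mem_range.mpr hjn,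
      (hA.1 (nn j)).2.1.mem_toFinset.mpr hAj⟩
  have hmem : ∀ m : Fin a.length, (a.getD m.1 fun _ => 0) ∈ a := by
    intro m
    rw [List.getD_eq_getElem a _ m.2]
    exact List.getElem_mem _
  have hw : ∀ m : Fin a.length, ∃ w, (a.getD m.1 fun _ => 0) w = k :=
    fun m => (ha.1.1 _ (hmem m)).2.2
  choose w hwk using hw
  have hwne : ∀ m, (a.getD m.1 fun _ => 0) (w m) ≠ 0 := by
    intro m; rw [hwk m]; omega
  have hwFs : ∀ m, w m ∈ Fs := fun m => (pP _ (hmem m)).2 (w m) (hwne m)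
  have hinj : Function.Injective (fun m : Fin a.length => (⟨w m, hwFs m⟩ : ↥Fs)) := by
    intro m m' heq
    have hww : w m = w m' := congrArg Subtype.val heq
    by_contra hne
    have hne' : m ≠ m' := hne
    rcases Fin.lt_or_lt_of_ne hne' with hlt | hlt
    · exact absurd (hww ▸ finBlockSeq_lt ha.1 hlt m'.2 (hwne m) (hwne m')) (lt_irrefl _)
    · exact absurd (hww ▸ finBlockSeq_lt ha.1 hlt m.2 (hwne m') (hwne m)) (lt_irrefl _)
  have hlen : a.length ≤ Fs.card := by
    have := Fintype.card_le_of_injective _ hinj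
    rwa [Fintype.card_fin, Fintype.card_coe] at this
  exact ⟨hlen, fun p hp => pP p hp⟩

end FINkSpace
namespace FINkSpace

/-- Density filtration lemma: given a coideal `H`, `A ∈ H` and a family `(D_a)`
of sets dense open in `H ∩ [depth_A(a), A]`, there is a sequence `(A_n)` in `H ↾ A`
with `A_n ∈ D_a` whenever `depth_A(a) = n`. -/
theorem density_filtration (k : ℕ) (H : Coideal k) (A : ℕ → ℕ → ℕ) (hA : H.mem A)
    (D : List (ℕ → ℕ) → Set (ℕ → ℕ → ℕ))
    (hD : ∀ a, FinCond k a A →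
      DenseOpenIn k (D a) ({B | H.mem B} ∩ Basic k (rList (depth k A a) A) A)) :
    ∃ As : ℕ → ℕ → ℕ → ℕ,
      ∀ n, H.mem (As n) ∧ Cond k (As n) A ∧
        ∀ a, FinCond k a A → depth k A a = n → As n ∈ D a := by

  classical
  have hAbs : IsBlockSeq k A := H.blockseq A hA
  have hself : ∀ n, A ∈ Basic k (rList n A) A :=
    fun n => ⟨hAbs, by rw [rList_length], cond_self k A⟩
  rcases Nat.eq_zero_or_pos k with rfl | hk
  · -- k = 0 : the only block sequence is the zero sequence
    refine ⟨fun _ => A, fun n => ⟨hA, cond_self 0 A, fun a ha hd => ?_⟩⟩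
    obtain ⟨hsub, hdense, hopen⟩ := hD a ha
    obtain ⟨B, hBD, hBA⟩ := hdense A ⟨hA, hself _⟩
    have hBbs : IsBlockSeq 0 B := (hsub hBD).2.1
    have hAB : A = B := by
      funext q m
      have h1 : A q m = 0 := Nat.le_antisymm ((hAbs.1 q).1 m) (Nat.zero_le _)
      have h2 : B q m = 0 := Nat.le_antisymm ((hBbs.1 q).1 m) (Nat.zero_le _)
      rw [h1, h2]
    rw [hAB]
    exact hBD
  · -- k ≥ 1
    have key : ∀ n, ∃ B, H.mem B ∧ Cond k B A ∧
        ∀ a, FinCond k a A → depth k A a = n → B ∈ D a := by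
      intro n
      set S : Set (ℕ → ℕ → ℕ) := {B | H.mem B} ∩ Basic k (rList n A) A with hSdef
      have hfin := finite_depth_eq hk hAbs (n := n)
      have fold : ∀ L : List (List (ℕ → ℕ)),
          (∀ a ∈ L, FinCond k a A ∧ depth k A a = n) →
          ∀ B0, B0 ∈ S → ∃ B, B ∈ S ∧ Cond k B B0 ∧ ∀ a ∈ L, B ∈ D a := by
        intro L
        induction L with
        | nil => exact fun _ B0 hB0 => ⟨B0, hB0, cond_self k B0, by simp⟩
        | cons a L' ih =>
          intro hL B0 hB0
          obtain ⟨ha, hdep⟩ := hL a (by simp)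
          have hDa := hD a ha
          rw [hdep] at hDa
          obtain ⟨hsub, hdense, hopen⟩ := hDa
          obtain ⟨B1, hB1D, hB1B0⟩ := hdense B0 hB0
          have hB1S : B1 ∈ S := hsub hB1D
          obtain ⟨B, hBS, hBB1, hBall⟩ := ih (fun a' ha' => hL a' (by simp [ha'])) B1 hB1S
          have hBbs : IsBlockSeq k B := hBS.2.1
          have hB1bs : IsBlockSeq k B1 := hB1S.2.1
          have hB0bs : IsBlockSeq k B0 := hB0.2.1
          refine ⟨B, hBS, cond_trans hB0bs hB1bs hBbs hBB1 hB1B0, ?_⟩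
          intro a' ha'
          rcases List.mem_cons.mp ha' with rfl | h'
          · exact hopen B B1 hBS hB1D hBB1
          · exact hBall a' h'
      obtain ⟨B, hBS, hBA, hBall⟩ := fold hfin.toFinset.toList
        (fun a haL => hfin.mem_toFinset.mp (Finset.mem_toList.mp haL))
        A ⟨hA, hself n⟩
      exact ⟨B, hBS.1, hBS.2.2.2, fun a ha hd => hBall a
        (Finset.mem_toList.mpr (hfin.mem_toFinset.mpr ⟨ha, hd⟩))⟩
    choose As h1 h2 h3 using key
    exact ⟨As, fun n => ⟨h1 n, h2 n, h3 n⟩⟩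

end FINkSpace
end

section
/- For a stable ordered-union ultrafilter U on FIN, the Ramsey property for pairs implies stability: if for every partition of the set of increasing pairs from FIN into two pieces there is X ∈ U with all pairs from X in one piece, then for every sequence (A_n) of block sequences with FU(A_n) ∈ U for all n there is a block sequence B with FU(B) ∈ U and B ≤* A_n for all n. -/
open scoped symmDiff

namespace FINSpace

/-- `A` is an infinite block sequence of elements of `FIN` (nonempty finite sets
of naturals with strictly increasing supports). -/
def BSeq (A : ℕ → Finset ℕ) : Prop :=
  (∀ n, (A n).Nonempty) ∧ ∀ n, ∀ i ∈ A n, ∀ j ∈ A (n + 1), i < j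

/-- `FU(A)`: the set of finite unions of terms of `A`. -/
def FU (A : ℕ → Finset ℕ) : Set (Finset ℕ) :=
  {s | ∃ F : Finset ℕ, F.Nonempty ∧ s = F.sup A}

/-- `B ≤ A` : every term of `B` is a finite union of terms of `A`. -/
def CondU (B A : ℕ → Finset ℕ) : Prop := ∀ n, B n ∈ FU A

/-- `B ≤* A` : all but finitely many terms of `B` are finite unions of terms of `A`. -/
def AlmostCondU (B A : ℕ → Finset ℕ) : Prop := ∃ N, ∀ n, N ≤ n → B n ∈ FU A

/-- `a` is a finite block sequence of elements of `FIN`. -/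
def IsFinBSeq (a : List (Finset ℕ)) : Prop :=
  (∀ s ∈ a, s.Nonempty) ∧
  ∀ m, m + 1 < a.length → ∀ i ∈ a.getD m ∅, ∀ j ∈ a.getD (m + 1) ∅, i < j

/-- `p` is a union of terms of the finite block sequence `a`. -/
def InSpanListU (a : List (Finset ℕ)) (p : Finset ℕ) : Prop :=
  ∃ F : Finset ℕ, F.Nonempty ∧ (∀ i ∈ F, i < a.length) ∧
    p = F.sup fun i => a.getD i ∅

/-- The first `n` blocks of `A`. -/
def rListU (n : ℕ) (A : ℕ → Finset ℕ) : List (Finset ℕ) := (List.range n).map A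

/-- The Ellentuck-type basic set `[a,A]`. -/
def BasicU (a : List (Finset ℕ)) (A : ℕ → Finset ℕ) : Set (ℕ → Finset ℕ) :=
  {B | BSeq B ∧ rListU a.length B = a ∧ CondU B A}

/-- `depth_A(a)`. -/
noncomputable def depthU (A : ℕ → Finset ℕ) (a : List (Finset ℕ)) : ℕ :=
  sInf {n | ∀ p ∈ a, InSpanListU (rListU n A) p}

/-- `a ∈ FIN^{<∞} ↾ A`. -/
def FinCondU (a : List (Finset ℕ)) (A : ℕ → Finset ℕ) : Prop :=
  IsFinBSeq a ∧ ∀ p ∈ a, p ∈ FU A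

end FINSpace

namespace FINSpace

/-- `f < g` : every element of `f` is below every element of `g`. -/
def finLt (f g : Finset ℕ) : Prop := ∀ i ∈ f, ∀ j ∈ g, i < j

/-- `U` is an ordered-union ultrafilter on `FIN`: a nonprincipal-type ultrafilter
on the set of nonempty finite subsets of `ℕ` with a basis of sets `FU(A)`. -/
def OrderedUnionUF (U : Set (Set (Finset ℕ))) : Prop :=
  (∀ X ∈ U, X ⊆ {s : Finset ℕ | s.Nonempty}) ∧
  (∀ X Y, X ∈ U → X ⊆ Y → Y ⊆ {s : Finset ℕ | s.Nonempty} → Y ∈ U) ∧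
  (∀ X Y, X ∈ U → Y ∈ U → X ∩ Y ∈ U) ∧
  (∅ ∉ U) ∧
  (∀ X : Set (Finset ℕ), X ⊆ {s : Finset ℕ | s.Nonempty} →
    X ∈ U ∨ {s : Finset ℕ | s.Nonempty} \ X ∈ U) ∧
  (∀ X ∈ U, ∃ A, BSeq A ∧ FU A ∈ U ∧ FU A ⊆ X)

lemma blockLE {A : ℕ → Finset ℕ} (hA : BSeq A) : ∀ m, ∀ i ∈ A m, m ≤ i := by
  intro m
  induction m with
  | zero => intro i _; exact Nat.zero_le i
  | succ m ih =>
    intro i hi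
    obtain ⟨j, hj⟩ := hA.1 m
    exact Nat.succ_le_of_lt (lt_of_le_of_lt (ih j hj) (hA.2 m j hj i hi))

lemma blockLt {A : ℕ → Finset ℕ} (hA : BSeq A) {n m : ℕ} (h : n < m) :
    finLt (A n) (A m) := by
  obtain ⟨d, rfl⟩ := Nat.exists_eq_add_of_lt h
  clear h
  induction d with
  | zero => exact fun i hi j hj => hA.2 n i hi j hj
  | succ d ih =>
    intro i hi j hj
    obtain ⟨k, hk⟩ := hA.1 (n + d + 1)
    exact lt_trans (ih i hi k hk) (hA.2 (n + d + 1) k hk j hj)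

lemma mem_FU_self (A : ℕ → Finset ℕ) (n : ℕ) : A n ∈ FU A :=
  ⟨{n}, Finset.singleton_nonempty n, (Finset.sup_singleton).symm⟩

lemma bigmin_mem {U : Set (Set (Finset ℕ))} (hU : OrderedUnionUF U) (K : ℕ) :
    {s : Finset ℕ | s.Nonempty ∧ ∀ i ∈ s, K < i} ∈ U := by
  obtain ⟨hne, hmono, hinter, hempty, hultra, hbasis⟩ := hU
  rcases hultra {s : Finset ℕ | s.Nonempty ∧ ∀ i ∈ s, K < i} (fun s hs => hs.1) with h | h
  · exact h
  · exfalso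
    obtain ⟨A, hA, hFU, hsub⟩ := hbasis _ h
    have hmem := hsub (mem_FU_self A (K + 1))
    exact hmem.2 ⟨hA.1 (K + 1), fun i hi => lt_of_lt_of_le (Nat.lt_succ_self K)
      (blockLE hA (K + 1) i hi)⟩

lemma inter_finite_mem {U : Set (Set (Finset ℕ))}
    (hinter : ∀ X Y, X ∈ U → Y ∈ U → X ∩ Y ∈ U)
    (f : ℕ → Set (Finset ℕ)) (S : Set (Finset ℕ)) (hS : S ∈ U) :
    ∀ K, (∀ k, k < K → f k ∈ U) → (S ∩ {g | ∀ k, k < K → g ∈ f k}) ∈ U := by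
  intro K
  induction K with
  | zero =>
    intro _
    have h : S ∩ {g | ∀ k, k < 0 → g ∈ f k} = S := by
      ext g; simp
    rw [h]; exact hS
  | succ K ih =>
    intro h
    have h1 := ih (fun k hk => h k (hk.trans (Nat.lt_succ_self K)))
    have h2 := hinter _ _ h1 (h K (Nat.lt_succ_self K))
    have heq : (S ∩ {g | ∀ k, k < K → g ∈ f k}) ∩ f K
        = S ∩ {g | ∀ k, k < K + 1 → g ∈ f k} := by
      ext g
      constructor
      · rintro ⟨⟨hgS, hg⟩, hgK⟩
        refine ⟨hgS, fun k hk => ?_⟩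
        rcases Nat.lt_succ_iff_lt_or_eq.mp hk with h' | rfl
        · exact hg k h'
        · exact hgK
      · rintro ⟨hgS, hg⟩
        exact ⟨⟨hgS, fun k hk => hg k (hk.trans (Nat.lt_succ_self K))⟩,
          hg K (Nat.lt_succ_self K)⟩
    rw [heq] at h2; exact h2

/-- For an ordered-union ultrafilter, the Ramsey property for pairs implies
stability. -/
theorem ramsey_pairs_implies_stable (U : Set (Set (Finset ℕ)))
    (hU : OrderedUnionUF U)
    (hRamsey : ∀ P : Set (Finset ℕ × Finset ℕ), ∃ X ∈ U,
      (∀ f g, f ∈ X → g ∈ X → finLt f g → (f, g) ∈ P) ∨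
      (∀ f g, f ∈ X → g ∈ X → finLt f g → (f, g) ∉ P)) :
    ∀ As : ℕ → ℕ → Finset ℕ, (∀ n, BSeq (As n) ∧ FU (As n) ∈ U) →
      ∃ B, BSeq B ∧ FU B ∈ U ∧ ∀ n, AlmostCondU B (As n) := by
  intro As hAs
  obtain ⟨hne, hmono, hinter, hempty, hultra, hbasis⟩ := hU
  set P : Set (Finset ℕ × Finset ℕ) :=
    {p | ∀ k, (∃ i ∈ p.1, k ≤ i) → p.2 ∈ FU (As k)} with hP
  obtain ⟨X, hXU, hhom⟩ := hRamsey P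
  obtain ⟨B, hB, hFB, hsub⟩ := hbasis X hXU
  rcases hhom with hpos | hneg
  · -- homogeneous positive side
    refine ⟨B, hB, hFB, fun n => ⟨n + 1, fun m hm => ?_⟩⟩
    have hfX : B n ∈ X := hsub (mem_FU_self B n)
    have hgX : B m ∈ X := hsub (mem_FU_self B m)
    have hlt : finLt (B n) (B m) := blockLt hB (Nat.lt_of_succ_le hm)
    have hmem := hpos (B n) (B m) hfX hgX hlt
    obtain ⟨i, hi⟩ := hB.1 n
    exact hmem n ⟨i, hi, blockLE hB n i hi⟩
  · -- homogeneous negative side: contradiction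
    exfalso
    have hfX : B 0 ∈ X := hsub (mem_FU_self B 0)
    obtain ⟨i0, hi0⟩ := hB.1 0
    set K := (B 0).max' ⟨i0, hi0⟩ with hK
    have hY : (X ∩ {s : Finset ℕ | s.Nonempty ∧ ∀ i ∈ s, K < i}) ∩
        {g | ∀ k, k < K + 1 → g ∈ FU (As k)} ∈ U := by
      refine inter_finite_mem hinter (fun k => FU (As k)) _ ?_ (K + 1)
        (fun k _ => (hAs k).2)
      exact hinter _ _ hXU (bigmin_mem ⟨hne, hmono, hinter, hempty, hultra, hbasis⟩ K)
    have hYne : ((X ∩ {s : Finset ℕ | s.Nonempty ∧ ∀ i ∈ s, K < i}) ∩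
        {g | ∀ k, k < K + 1 → g ∈ FU (As k)}).Nonempty := by
      by_contra h
      rw [Set.not_nonempty_iff_eq_empty] at h
      rw [h] at hY
      exact hempty hY
    obtain ⟨g, ⟨⟨hgX, _, hgK⟩, hgFU⟩⟩ := hYne
    have hlt : finLt (B 0) g := fun i hi j hj =>
      lt_of_le_of_lt (Finset.le_max' _ i hi) (hgK j hj)
    refine hneg (B 0) g hfX hgX hlt ?_
    intro k ⟨i, hi, hki⟩
    exact hgFU k (Nat.lt_succ_of_le (le_trans hki (Finset.le_max' _ i hi)))


end FINSpace
end
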